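/- Let W be a 3-dimensional complex vector space, ω a nonzero element of Λ³W^∨, and α : W → Λ²W^∨ the isomorphism v ↦ v⌟ω (contraction of ω with v). Then the trilinear map γ : Λ²W^∨ × Λ²W^∨ × Λ²W^∨ → Λ³W^∨ defined by γ(ξ₁, ξ₂, ξ₃) = (α^{−1}(ξ₁) ⌟ ξ₂) ∧ ξ₃ is skew-symmetric (alternating) in its three arguments. -/
import Mathlib


/-!
STATEMENT 7: Let `W` be a 3-dimensional complex vector space, `ω` a nonzero element of
`Λ³W^∨`, and `α : W → Λ²W^∨` the isomorphism `v ↦ v⌟ω`.  Then the trilinear map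
`γ : Λ²W^∨ × Λ²W^∨ × Λ²W^∨ → Λ³W^∨`, `γ(ξ₁,ξ₂,ξ₃) = (α⁻¹(ξ₁) ⌟ ξ₂) ∧ ξ₃`,
is skew-symmetric (alternating) in its three arguments.

Here `Λ^k W^∨` is modelled as the space `W [⋀^Fin k]→ₗ[ℂ] ℂ` of alternating `k`-forms on `W`,
the interior product `v ⌟ ξ` as `ξ.curryLeft v`, and the exterior product of a 1-form with a
2-form via `AlternatingMap.domCoprod`.
-/

open Module

/-- The exterior (wedge) product of a 1-form and a 2-form on `W`, as a 3-form. -/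
noncomputable def wedgeOneTwo {W : Type*} [AddCommGroup W] [Module ℂ W]
    (η : W [⋀^Fin 1]→ₗ[ℂ] ℂ) (ξ : W [⋀^Fin 2]→ₗ[ℂ] ℂ) : W [⋀^Fin 3]→ₗ[ℂ] ℂ :=
  (TensorProduct.lid ℂ ℂ).toLinearMap.compAlternatingMap
    ((η.domCoprod ξ).domDomCongr finSumFinEquiv)

/-- The trilinear map `γ(ξ₁,ξ₂,ξ₃) = (α⁻¹(ξ₁) ⌟ ξ₂) ∧ ξ₃` associated to an
isomorphism `α : W ≃ Λ²W^∨`. -/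
noncomputable def gammaForm {W : Type*} [AddCommGroup W] [Module ℂ W]
    (α : W ≃ₗ[ℂ] (W [⋀^Fin 2]→ₗ[ℂ] ℂ))
    (ξ₁ ξ₂ ξ₃ : W [⋀^Fin 2]→ₗ[ℂ] ℂ) : W [⋀^Fin 3]→ₗ[ℂ] ℂ :=
  wedgeOneTwo (ξ₂.curryLeft (α.symm ξ₁)) ξ₃

section Aux
open Equiv AlternatingMap

def msEquiv : (Fin 1 ⊕ Fin 2) ≃ Equiv.Perm.ModSumCongr (Fin 1) (Fin 2) where
  toFun x := Quotient.mk'' (Equiv.swap (Sum.inl 0) x)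
  invFun q := Quotient.liftOn' q (fun σ => σ (Sum.inl 0)) (by
    intro σ₁ σ₂ h
    rw [QuotientGroup.leftRel_apply] at h
    obtain ⟨⟨sl, sr⟩, h⟩ := h
    have h2 : σ₂ = σ₁ * Equiv.Perm.sumCongrHom _ _ (sl, sr) := by
      rw [h, mul_inv_cancel_left]
    simp only [h2, Equiv.Perm.mul_apply, Equiv.Perm.sumCongrHom_apply,
      Equiv.Perm.sumCongr_apply, Sum.map_inl]
    congr 2
    exact Subsingleton.elim _ _)
  left_inv x := by simp [Quotient.liftOn'_mk'']
  right_inv q := by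
    refine Quotient.inductionOn' q fun σ => ?_
    refine Quotient.sound' ?_
    rw [QuotientGroup.leftRel_apply]
    apply Equiv.Perm.mem_sumCongrHom_range_of_perm_mapsTo_inl
    rintro z ⟨a, rfl⟩
    have ha : a = 0 := Subsingleton.elim _ _
    subst ha
    refine ⟨0, ?_⟩
    simp [Equiv.Perm.mul_apply, Equiv.swap_inv]

variable {W : Type*} [AddCommGroup W] [Module ℂ W]

lemma alt2_swap (ξ : W [⋀^Fin 2]→ₗ[ℂ] ℂ) (x y : W) : ξ ![y, x] = - ξ ![x, y] := by
  have h := ξ.map_swap ![x, y] (i := 0) (j := 1) (by decide)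
  have h2 : (![x, y] ∘ Equiv.swap (0 : Fin 2) 1) = ![y, x] := by
    funext i; fin_cases i <;> simp
  rwa [h2] at h

lemma alt3_swap (ω : W [⋀^Fin 3]→ₗ[ℂ] ℂ) (x y z : W) : ω ![y, x, z] = - ω ![x, y, z] := by
  have h := ω.map_swap ![x, y, z] (i := 0) (j := 1) (by decide)
  have h2 : (![x, y, z] ∘ Equiv.swap (0 : Fin 3) 1) = ![y, x, z] := by
    funext i; fin_cases i <;> simp [Equiv.swap_apply_def]
  rwa [h2] at h

lemma alt3_add (ω : W [⋀^Fin 3]→ₗ[ℂ] ℂ) (a c x y : W) :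
    ω ![a + c, x, y] = ω ![a, x, y] + ω ![c, x, y] := by
  have hu : ∀ t : W, Function.update ![(0 : W), x, y] 0 t = ![t, x, y] := by
    intro t; funext i; fin_cases i <;> simp [Function.update]
  have h := ω.map_update_add ![(0 : W), x, y] 0 a c
  rwa [hu, hu, hu] at h

set_option linter.unnecessarySeqFocus false in
lemma wedgeOneTwo_apply (η : W [⋀^Fin 1]→ₗ[ℂ] ℂ) (ξ : W [⋀^Fin 2]→ₗ[ℂ] ℂ) (m : Fin 3 → W) :
    wedgeOneTwo η ξ m = η ![m 0] * ξ ![m 1, m 2] - η ![m 1] * ξ ![m 0, m 2]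
      + η ![m 2] * ξ ![m 0, m 1] := by
  rw [wedgeOneTwo]
  simp only [LinearMap.compAlternatingMap_apply, AlternatingMap.domDomCongr_apply,
    AlternatingMap.domCoprod_apply, MultilinearMap.sum_apply]
  rw [← Equiv.sum_comp msEquiv, Fintype.sum_sum_type]
  simp only [Fin.sum_univ_one, Fin.sum_univ_two]
  show (TensorProduct.lid ℂ ℂ) (AlternatingMap.domCoprod.summand η ξ (msEquiv (Sum.inl 0)) _ +
    (AlternatingMap.domCoprod.summand η ξ (msEquiv (Sum.inr 0)) _ +
     AlternatingMap.domCoprod.summand η ξ (msEquiv (Sum.inr 1)) _)) = _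
  have e0 : msEquiv (Sum.inl 0) = Quotient.mk'' (Equiv.swap (Sum.inl 0) (Sum.inl 0)) := rfl
  have e1 : msEquiv (Sum.inr 0) = Quotient.mk'' (Equiv.swap (Sum.inl 0) (Sum.inr 0)) := rfl
  have e2 : msEquiv (Sum.inr 1) = Quotient.mk'' (Equiv.swap (Sum.inl 0) (Sum.inr 1)) := rfl
  rw [e0, e1, e2]
  rw [AlternatingMap.domCoprod.summand_mk'', AlternatingMap.domCoprod.summand_mk'',
      AlternatingMap.domCoprod.summand_mk'']
  have s1 : Equiv.Perm.sign (Equiv.swap (Sum.inl 0 : Fin 1 ⊕ Fin 2) (Sum.inr 0)) = -1 :=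
    Equiv.Perm.sign_swap (by decide)
  have s2 : Equiv.Perm.sign (Equiv.swap (Sum.inl 0 : Fin 1 ⊕ Fin 2) (Sum.inr 1)) = -1 :=
    Equiv.Perm.sign_swap (by decide)
  simp only [Equiv.swap_self, Equiv.Perm.sign_refl, s1, s2,
    MultilinearMap.smul_apply, MultilinearMap.domDomCongr_apply, MultilinearMap.domCoprod_apply,
    AlternatingMap.coe_multilinearMap, one_smul, Units.neg_smul, map_add, map_neg,
    MultilinearMap.neg_apply,
    TensorProduct.lid_tmul, smul_eq_mul]
  have f0 : (fun i : Fin 1 => (m ∘ ⇑finSumFinEquiv) ((Equiv.refl (Fin 1 ⊕ Fin 2)) (Sum.inl i)))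
      = ![m 0] := by funext i; fin_cases i <;> (simp; try congr 1)
  have f0' : (fun i : Fin 2 => (m ∘ ⇑finSumFinEquiv) ((Equiv.refl (Fin 1 ⊕ Fin 2)) (Sum.inr i)))
      = ![m 1, m 2] := by funext i; fin_cases i <;> (simp; try congr 1)
  have f1 : (fun i : Fin 1 =>
      (m ∘ ⇑finSumFinEquiv) ((Equiv.swap (Sum.inl (0:Fin 1)) (Sum.inr (0:Fin 2))) (Sum.inl i)))
      = ![m 1] := by funext i; fin_cases i <;> (simp; try congr 1)
  have f1' : (fun i : Fin 2 =>
      (m ∘ ⇑finSumFinEquiv) ((Equiv.swap (Sum.inl (0:Fin 1)) (Sum.inr (0:Fin 2))) (Sum.inr i)))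
      = ![m 0, m 2] := by
    funext i; fin_cases i <;> (simp [Equiv.swap_apply_def]; try congr 1)
  have f2 : (fun i : Fin 1 =>
      (m ∘ ⇑finSumFinEquiv) ((Equiv.swap (Sum.inl (0:Fin 1)) (Sum.inr (1:Fin 2))) (Sum.inl i)))
      = ![m 2] := by funext i; fin_cases i <;> (simp; try congr 1)
  have f2' : (fun i : Fin 2 =>
      (m ∘ ⇑finSumFinEquiv) ((Equiv.swap (Sum.inl (0:Fin 1)) (Sum.inr (1:Fin 2))) (Sum.inr i)))
      = ![m 1, m 0] := by
    funext i; fin_cases i <;> (simp [Equiv.swap_apply_def]; try congr 1)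
  rw [f0, f0', f1, f1', f2, f2', alt2_swap ξ (m 0) (m 1)]
  ring

lemma det_scalar (b : Basis (Fin 3) ℂ W) (ω : W [⋀^Fin 3]→ₗ[ℂ] ℂ) (u v : W) :
    ω ![v, u, b 0] * ω ![v, b 1, b 2] - ω ![v, u, b 1] * ω ![v, b 0, b 2]
      + ω ![v, u, b 2] * ω ![v, b 0, b 1] = 0 := by
  have hω : ∀ x y z : W, ω ![x, y, z] = ω ⇑b * b.det ![x, y, z] := by
    intro x y z
    conv_lhs => rw [ω.eq_smul_basis_det b]
    simp
  have hdet : ∀ x y z : W, b.det ![x, y, z] =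
      b.repr x 0 * (b.repr y 1 * b.repr z 2 - b.repr y 2 * b.repr z 1)
      - b.repr y 0 * (b.repr x 1 * b.repr z 2 - b.repr x 2 * b.repr z 1)
      + b.repr z 0 * (b.repr x 1 * b.repr y 2 - b.repr x 2 * b.repr y 1) := by
    intro x y z
    rw [Basis.det_apply, Matrix.det_fin_three]
    simp [Basis.toMatrix_apply]
    ring
  simp only [hω, hdet]
  simp [Basis.repr_self_apply]
  ring

/-- The Plücker-type identity in dimension 3. -/
lemma pluecker (hdim : finrank ℂ W = 3) (ω : W [⋀^Fin 3]→ₗ[ℂ] ℂ) (u v x y z : W) :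
    ω ![v, u, x] * ω ![v, y, z] - ω ![v, u, y] * ω ![v, x, z]
      + ω ![v, u, z] * ω ![v, x, y] = 0 := by
  have : FiniteDimensional ℂ W := FiniteDimensional.of_finrank_pos (by rw [hdim]; norm_num)
  let b : Basis (Fin 3) ℂ W := finBasisOfFinrankEq ℂ W hdim
  set E : W [⋀^Fin 3]→ₗ[ℂ] ℂ := wedgeOneTwo ((ω.curryLeft v).curryLeft u) (ω.curryLeft v)
    with hEdef
  have hcurry1 : ∀ t : W, ((ω.curryLeft v).curryLeft u) ![t] = ω ![v, u, t] := fun t => rfl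
  have hcurry2 : ∀ s t : W, (ω.curryLeft v) ![s, t] = ω ![v, s, t] := fun s t => rfl
  have hEb : E ⇑b = 0 := by
    rw [hEdef, wedgeOneTwo_apply]
    rw [hcurry1, hcurry1, hcurry1, hcurry2, hcurry2, hcurry2]
    exact det_scalar b ω u v
  have hE : E = 0 := by
    rw [E.eq_smul_basis_det b, hEb, zero_smul]
  have := congrArg (fun f : W [⋀^Fin 3]→ₗ[ℂ] ℂ => f ![x, y, z]) hE
  simp only [AlternatingMap.zero_apply] at this
  rw [hEdef, wedgeOneTwo_apply] at this
  simp only [Matrix.cons_val_zero, Matrix.cons_val_one, Matrix.head_cons,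
    Matrix.cons_val_two, Matrix.tail_cons] at this
  rw [hcurry1, hcurry1, hcurry1, hcurry2, hcurry2, hcurry2] at this
  exact this

end Aux

/-- for a 3-dimensional complex vector space `W`, a nonzero 3-form `ω` on `W`
and the isomorphism `α : W ≃ Λ²W^∨`, `v ↦ v ⌟ ω`, the trilinear map
`γ(ξ₁,ξ₂,ξ₃) = (α⁻¹(ξ₁) ⌟ ξ₂) ∧ ξ₃` is alternating in its three arguments. -/
theorem gammaForm_skew {W : Type*} [AddCommGroup W] [Module ℂ W]
    (hdim : finrank ℂ W = 3)
    (ω : W [⋀^Fin 3]→ₗ[ℂ] ℂ) (hω : ω ≠ 0)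
    (α : W ≃ₗ[ℂ] (W [⋀^Fin 2]→ₗ[ℂ] ℂ))
    (hα : ∀ v : W, α v = ω.curryLeft v) :
    (∀ ξ₁ ξ₂ ξ₃, gammaForm α ξ₂ ξ₁ ξ₃ = - gammaForm α ξ₁ ξ₂ ξ₃) ∧
    (∀ ξ₁ ξ₂ ξ₃, gammaForm α ξ₁ ξ₃ ξ₂ = - gammaForm α ξ₁ ξ₂ ξ₃) ∧
    (∀ ξ₁ ξ₂ ξ₃, gammaForm α ξ₃ ξ₂ ξ₁ = - gammaForm α ξ₁ ξ₂ ξ₃) := by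
  -- pointwise description of `gammaForm` on the image of `α`
  have key : ∀ (v₁ v₂ v₃ : W) (m : Fin 3 → W),
      gammaForm α (α v₁) (α v₂) (α v₃) m =
        ω ![v₂, v₁, m 0] * ω ![v₃, m 1, m 2] - ω ![v₂, v₁, m 1] * ω ![v₃, m 0, m 2]
          + ω ![v₂, v₁, m 2] * ω ![v₃, m 0, m 1] := by
    intro v₁ v₂ v₃ m
    rw [gammaForm, LinearEquiv.symm_apply_apply, hα v₂, hα v₃, wedgeOneTwo_apply]
    rfl
  have claim1 : ∀ ξ₁ ξ₂ ξ₃, gammaForm α ξ₂ ξ₁ ξ₃ = - gammaForm α ξ₁ ξ₂ ξ₃ := by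
    intro ξ₁ ξ₂ ξ₃
    obtain ⟨v₁, rfl⟩ := α.surjective ξ₁
    obtain ⟨v₂, rfl⟩ := α.surjective ξ₂
    obtain ⟨v₃, rfl⟩ := α.surjective ξ₃
    ext m
    rw [AlternatingMap.neg_apply, key, key]
    rw [alt3_swap ω v₁ v₂ (m 0), alt3_swap ω v₁ v₂ (m 1), alt3_swap ω v₁ v₂ (m 2)]
    ring
  have claim2 : ∀ ξ₁ ξ₂ ξ₃, gammaForm α ξ₁ ξ₃ ξ₂ = - gammaForm α ξ₁ ξ₂ ξ₃ := by
    intro ξ₁ ξ₂ ξ₃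
    obtain ⟨v₁, rfl⟩ := α.surjective ξ₁
    obtain ⟨v₂, rfl⟩ := α.surjective ξ₂
    obtain ⟨v₃, rfl⟩ := α.surjective ξ₃
    ext m
    rw [AlternatingMap.neg_apply, key, key]
    -- polarization of the Plücker identity
    have h1 := pluecker hdim ω v₁ (v₂ + v₃) (m 0) (m 1) (m 2)
    have h2 := pluecker hdim ω v₁ v₂ (m 0) (m 1) (m 2)
    have h3 := pluecker hdim ω v₁ v₃ (m 0) (m 1) (m 2)
    simp only [alt3_add] at h1
    linear_combination h1 - h2 - h3
  refine ⟨claim1, claim2, fun ξ₁ ξ₂ ξ₃ => ?_⟩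
  calc gammaForm α ξ₃ ξ₂ ξ₁ = - gammaForm α ξ₂ ξ₃ ξ₁ := claim1 ξ₂ ξ₃ ξ₁
    _ = - - gammaForm α ξ₂ ξ₁ ξ₃ := by rw [claim2 ξ₂ ξ₁ ξ₃]
    _ = gammaForm α ξ₂ ξ₁ ξ₃ := neg_neg _
    _ = - gammaForm α ξ₁ ξ₂ ξ₃ := claim1 ξ₁ ξ₂ ξ₃
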